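/- arXiv:1901.04036 — 2 statements merged into one kernel-verified Lean document; each statement's English description precedes it below -/
import Mathlib

section
/- Let l, w be positive integers and i ∈ {1,2}, and let h(p) = h^{(i)}_{l,w}(p) be the reliability polynomial of the hammock network H^{(i)}_{l,w}, viewed as a real polynomial function. Then the k-th derivative of h vanishes at 0 for every k = 0, 1, …, l−1. -/
open scoped Classical

/-- Parity predicate: kind 1 = even points (x+y even), kind 2 = odd points. -/
def HammockPar (i : ℕ) (p : ℤ × ℤ) : Prop :=
  if i = 1 then Even (p.1 + p.2) else Odd (p.1 + p.2)

/-- The set 𝒱_{l,w} of lattice points of the rectangle [0,l] × [0,w]. -/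
def HammockVAll (l w : ℕ) : Set (ℤ × ℤ) :=
  {p | 0 ≤ p.1 ∧ p.1 ≤ (l : ℤ) ∧ 0 ≤ p.2 ∧ p.2 ≤ (w : ℤ)}

/-- The vertex set V^{(i)}_{l,w} of the hammock network of kind `i`. -/
def HammockV (i l w : ℕ) : Set (ℤ × ℤ) :=
  {p | p ∈ HammockVAll l w ∧ HammockPar i p}

/-- The set 𝓔_{l,w} of all diagonal unit edges inside the rectangle. -/
def HammockEAll (l w : ℕ) : Set (Sym2 (ℤ × ℤ)) :=
  {e | ∃ a b : ℤ × ℤ, e = s(a, b) ∧ a ∈ HammockVAll l w ∧ b ∈ HammockVAll l w ∧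
      |a.1 - b.1| = 1 ∧ |a.2 - b.2| = 1}

/-- The edge set E^{(i)}_{l,w} of the hammock network of kind `i`. -/
def HammockE (i l w : ℕ) : Set (Sym2 (ℤ × ℤ)) :=
  {e | e ∈ HammockEAll l w ∧ ∀ p ∈ e, HammockPar i p}

/-- The allowed steps of an X-path. -/
def XStep : Set (ℤ × ℤ) := {(1, 1), (-1, 1), (1, -1), (-1, -1)}

/-- An X-path: a finite sequence of pairwise distinct lattice points, each obtained
from the previous one by a step in `XStep`. -/
def IsXPath (vs : List (ℤ × ℤ)) : Prop :=
  vs.Nodup ∧ vs.Chain' (fun a b => b - a ∈ XStep)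

/-- The list of edges of an X-path. -/
def xEdges (vs : List (ℤ × ℤ)) : List (Sym2 (ℤ × ℤ)) :=
  (vs.zip vs.tail).map fun q => s(q.1, q.2)

/-- A two-terminal network on the diagonal lattice: an edge set together with
a set of source nodes and a set of terminus nodes. -/
structure HNetwork where
  edges : Set (Sym2 (ℤ × ℤ))
  src : Set (ℤ × ℤ)
  tgt : Set (ℤ × ℤ)

/-- `P` is a pathset: `P ⊆ edges` and `P` contains all edges of some X-path
joining a source node to a terminus node. -/
def HNetwork.IsPathset (N : HNetwork) (P : Set (Sym2 (ℤ × ℤ))) : Prop :=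
  P ⊆ N.edges ∧ ∃ (vs : List (ℤ × ℤ)) (h : vs ≠ []),
    IsXPath vs ∧ vs.head h ∈ N.src ∧ vs.getLast h ∈ N.tgt ∧ ∀ e ∈ xEdges vs, e ∈ P

/-- `C` is a cutset: removing `C` leaves no pathset. -/
def HNetwork.IsCutset (N : HNetwork) (C : Set (Sym2 (ℤ × ℤ))) : Prop :=
  C ⊆ N.edges ∧ ¬ N.IsPathset (N.edges \ C)

/-- A minpath: a pathset no proper subset of which is a pathset. -/
def HNetwork.IsMinpath (N : HNetwork) (P : Set (Sym2 (ℤ × ℤ))) : Prop :=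
  N.IsPathset P ∧ ∀ Q, Q ⊂ P → ¬ N.IsPathset Q

/-- A mincut: a cutset no proper subset of which is a cutset. -/
def HNetwork.IsMincut (N : HNetwork) (C : Set (Sym2 (ℤ × ℤ))) : Prop :=
  N.IsCutset C ∧ ∀ D, D ⊂ C → ¬ N.IsCutset D

/-- The hammock network H^{(i)}_{l,w}: sources are its vertices with x = 0,
terminals its vertices with x = l. -/
def hammock (i l w : ℕ) : HNetwork where
  edges := HammockE i l w
  src := {p | p ∈ HammockV i l w ∧ p.1 = 0}
  tgt := {p | p ∈ HammockV i l w ∧ p.1 = (l : ℤ)}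

/-- The dual network H̄^{(i)}_{l,w}: vertex set 𝒱 − V^{(i)}, edge set 𝓔 − E^{(i)},
sources the points with y = 0, terminals the points with y = w. -/
def hammockDual (i l w : ℕ) : HNetwork where
  edges := HammockEAll l w \ HammockE i l w
  src := {p | p ∈ HammockVAll l w \ HammockV i l w ∧ p.2 = 0}
  tgt := {p | p ∈ HammockVAll l w \ HammockV i l w ∧ p.2 = (w : ℤ)}

/-- The complementary edge: ē of e = {(x,y),(x+1,y±1)} is {(x+1,y),(x,y±1)}. -/
def complEdge : Sym2 (ℤ × ℤ) → Sym2 (ℤ × ℤ) :=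
  Sym2.lift ⟨fun a b => s((a.1, b.2), (b.1, a.2)), fun _ _ => Sym2.eq_swap⟩

/-- The other kind: 2/1 = 2 and 2/2 = 1. -/
def otherKind (i : ℕ) : ℕ := if i = 1 then 2 else 1

/-- The edge set E^{(i)}_{l,w} as a finite set. -/
noncomputable def hammockEFinset (i l w : ℕ) : Finset (Sym2 (ℤ × ℤ)) :=
  ((Finset.Icc (0 : ℤ) l) ×ˢ (Finset.Icc (0 : ℤ) w)).sym2.filter (· ∈ HammockE i l w)

/-- The reliability polynomial h^{(i)}_{l,w}(p) = Σ_P p^{|P|} (1-p)^{lw-|P|},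
summing over all pathsets P of H^{(i)}_{l,w}. -/
noncomputable def hammockRel (i l w : ℕ) (p : ℝ) : ℝ :=
  ∑ P ∈ (hammockEFinset i l w).powerset.filter (fun P : Finset (Sym2 (ℤ × ℤ)) => (hammock i l w).IsPathset ↑P),
    p ^ P.card * (1 - p) ^ (l * w - P.card)

/-
Every pathset contains all edges of an X-path from the line x = 0 to the line x = l. Each step
of an X-path moves x by at most one, and its vertices are distinct, hence so are its edges: every
pathset has at least l edges. So every term of h is divisible by p^l, and the derivatives of
order < l vanish at 0.
-/

open Polynomial

theorem Polynomial.iteratedDeriv_eval {𝕜 : Type*} [NontriviallyNormedField 𝕜] (p : 𝕜[X])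
    (k : ℕ) : iteratedDeriv k (fun x => p.eval x) = fun x => (derivative^[k] p).eval x := by
  rw [iteratedDeriv_eq_iterate]
  have hsemiconj : Function.Semiconj (fun (q : 𝕜[X]) (x : 𝕜) => q.eval x) derivative deriv :=
    fun q => by ext x; exact (Polynomial.deriv q).symm
  exact (hsemiconj.iterate_right k p).symm

theorem Polynomial.iteratedDeriv_eval_zero_of_X_pow_dvd {𝕜 : Type*}
    [NontriviallyNormedField 𝕜] {p : 𝕜[X]} {n k : ℕ} (hp : X ^ n ∣ p) (hk : k < n) :
    iteratedDeriv k (fun x => p.eval x) 0 = 0 := by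
  rw [iteratedDeriv_eval]
  dsimp only
  rw [← coeff_zero_eq_eval_zero, coeff_iterate_derivative, zero_add,
    X_pow_dvd_iff.mp hp k hk, smul_zero]

theorem fst_sub_fst_le_one_of_sub_mem_XStep {a b : ℤ × ℤ} (h : b - a ∈ XStep) :
    b.1 - a.1 ≤ 1 := by
  simp only [XStep, Set.mem_insert_iff, Set.mem_singleton_iff, Prod.ext_iff,
    Prod.fst_sub, Prod.snd_sub] at h
  omega

theorem getLast_fst_sub_head_fst_le_of_isChain :
    ∀ (vs : List (ℤ × ℤ)) (h : vs ≠ []), vs.IsChain (fun a b => b - a ∈ XStep) →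
      (vs.getLast h).1 - (vs.head h).1 ≤ vs.length - 1
  | [_], _, _ => by simp
  | a :: b :: t, _, hchain => by
    obtain ⟨hab, hchain⟩ := List.isChain_cons_cons.mp hchain
    have ih := getLast_fst_sub_head_fst_le_of_isChain (b :: t) (List.cons_ne_nil b t) hchain
    have hstep := fst_sub_fst_le_one_of_sub_mem_XStep hab
    simp only [List.getLast_cons_cons, List.head_cons, List.length_cons] at ih ⊢
    push_cast at ih ⊢
    omega

theorem xEdges_cons_cons (a b : ℤ × ℤ) (t : List (ℤ × ℤ)) :
    xEdges (a :: b :: t) = s(a, b) :: xEdges (b :: t) := rfl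

theorem length_xEdges (vs : List (ℤ × ℤ)) : (xEdges vs).length = vs.length - 1 := by
  simp [xEdges]

theorem mem_of_mem_xEdges {vs : List (ℤ × ℤ)} {e : Sym2 (ℤ × ℤ)} (he : e ∈ xEdges vs)
    {v : ℤ × ℤ} (hv : v ∈ e) : v ∈ vs := by
  obtain ⟨⟨a, b⟩, hab, rfl⟩ := List.mem_map.mp he
  rcases Sym2.mem_iff.mp hv with rfl | rfl
  · exact List.of_mem_zip hab |>.1
  · exact List.mem_of_mem_tail (List.of_mem_zip hab).2

theorem nodup_xEdges : ∀ {vs : List (ℤ × ℤ)}, vs.Nodup → (xEdges vs).Nodup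
  | [], _ | [_], _ => List.nodup_nil
  | a :: b :: t, hnodup => by
    rw [xEdges_cons_cons, List.nodup_cons]
    obtain ⟨ha, hbt⟩ := List.nodup_cons.mp hnodup
    exact ⟨fun he => ha (mem_of_mem_xEdges he (Sym2.mem_mk_left a b)), nodup_xEdges hbt⟩

theorem le_card_of_isPathset_hammock {i l w : ℕ} {P : Finset (Sym2 (ℤ × ℤ))}
    (hP : (hammock i l w).IsPathset ↑P) : l ≤ P.card := by
  obtain ⟨-, vs, hne, ⟨hnodup, hchain⟩, hsrc, htgt, hsub⟩ := hP
  have hx := getLast_fst_sub_head_fst_le_of_isChain vs hne hchain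
  rw [htgt.2, hsrc.2] at hx
  calc l ≤ (xEdges vs).length := by rw [length_xEdges]; omega
    _ = (xEdges vs).toFinset.card := (List.toFinset_card_of_nodup (nodup_xEdges hnodup)).symm
    _ ≤ P.card := Finset.card_le_card fun e he => hsub e (List.mem_toFinset.mp he)

noncomputable def hammockRelPoly (i l w : ℕ) : ℝ[X] :=
  ∑ P ∈ (hammockEFinset i l w).powerset.filter
      (fun P : Finset (Sym2 (ℤ × ℤ)) => (hammock i l w).IsPathset ↑P),
    X ^ P.card * (1 - X) ^ (l * w - P.card)

theorem hammockRel_eq_eval (i l w : ℕ) :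
    hammockRel i l w = fun p => (hammockRelPoly i l w).eval p := by
  funext p
  simp [hammockRel, hammockRelPoly, eval_finsetSum]

theorem X_pow_dvd_hammockRelPoly (i l w : ℕ) : X ^ l ∣ hammockRelPoly i l w :=
  Finset.dvd_sum fun _ hP => dvd_mul_of_dvd_left
    (pow_dvd_pow X (le_card_of_isPathset_hammock (Finset.mem_filter.mp hP).2)) _

theorem hammockRel_iteratedDeriv_zero_general (l w : ℕ)
    (i : ℕ) (k : ℕ) (hk : k < l) :
    iteratedDeriv k (hammockRel i l w) 0 = 0 := by
  rw [hammockRel_eq_eval]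
  exact iteratedDeriv_eval_zero_of_X_pow_dvd (X_pow_dvd_hammockRelPoly i l w) hk

/-- The k-th derivative of h = h^{(i)}_{l,w} vanishes at 0
for every k = 0, 1, …, l−1. -/
theorem hammockRel_iteratedDeriv_zero (l w : ℕ) (hl : 0 < l) (hw : 0 < w)
    (i : ℕ) (hi : i = 1 ∨ i = 2) (k : ℕ) (hk : k < l) :
    iteratedDeriv k (hammockRel i l w) 0 = 0 :=
  hammockRel_iteratedDeriv_zero_general l w i k hk
end

section
/- Let l, w be positive integers and i ∈ {1,2}. Every mincut Σ of the hammock network H^{(i)}_{l,w} contains exactly one edge having an endpoint on the line y = 0, and exactly one edge having an endpoint on the line y = w. -/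
open scoped Classical

/-!
Let `A` and `B` be the vertices joined to a source, resp. to a terminus, by edges outside a
mincut `Σ`. By minimality every edge of `Σ` joins a vertex of `A` to a vertex of `B`.
The edges touching `y = 0` form a zigzag from the left side to the right side on the rows
`y ∈ {0, 1}`, so `Σ` contains one of them. On these two rows every vertex of `A` lies strictly
left of every vertex of `B`: otherwise an X-walk inside `A` from the left side down to the
zigzag and an X-walk inside `B` from further left on the zigzag to the right side would cross,
and X-walks of the same parity only cross at a common vertex. This is a discrete Jordan curve
argument, counting mod 2 the crossings of one walk with vertical half-lines hanging below the
vertices of the other. Hence each zigzag edge of `Σ` has its `A`-end on the left, and two of them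
would put a vertex of `B` left of a vertex of `A`.
The line `y = w` is handled by the reflection `y ↦ w - y`, which maps hammocks to hammocks.
-/

open SimpleGraph

def xGraph : SimpleGraph (ℤ × ℤ) where
  Adj a b := b - a ∈ XStep
  symm := ⟨fun a b h => by
    simp only [XStep, Set.mem_insert_iff, Set.mem_singleton_iff, Prod.ext_iff, Prod.fst_sub,
      Prod.snd_sub] at h ⊢
    omega⟩
  loopless := ⟨fun a h => by
    simp only [XStep, Set.mem_insert_iff, Set.mem_singleton_iff, Prod.ext_iff, Prod.fst_sub,
      Prod.snd_sub] at h
    omega⟩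

lemma xGraph_adj_iff {a b : ℤ × ℤ} :
    xGraph.Adj a b ↔ (b.1 = a.1 + 1 ∨ b.1 = a.1 - 1) ∧ (b.2 = a.2 + 1 ∨ b.2 = a.2 - 1) := by
  change b - a ∈ XStep ↔ _
  simp only [XStep, Set.mem_insert_iff, Set.mem_singleton_iff, Prod.ext_iff, Prod.fst_sub,
    Prod.snd_sub]
  omega

lemma xEdges_eq_zipWith (vs : List (ℤ × ℤ)) : xEdges vs = List.zipWith (s(·, ·)) vs vs.tail := by
  rw [xEdges, ← List.map_uncurry_zip_eq_zipWith]
  rfl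

namespace SimpleGraph

variable {V : Type*}

lemma reachable_fromEdgeSet_insert {P : Set (Sym2 V)} {x y u v : V}
    (h : (fromEdgeSet (insert s(x, y) P)).Reachable u v) :
    (fromEdgeSet P).Reachable u v ∨
      (fromEdgeSet P).Reachable u x ∧ (fromEdgeSet P).Reachable y v ∨
      (fromEdgeSet P).Reachable u y ∧ (fromEdgeSet P).Reachable x v := by
  obtain ⟨W⟩ := h
  induction W with
  | nil => exact .inl .rfl
  | cons hadj _ ih =>
    obtain ⟨hxy | hP, hne⟩ := hadj
    · rcases Sym2.eq_iff.mp hxy with ⟨rfl, rfl⟩ | ⟨rfl, rfl⟩ <;> grind [Reachable.refl]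
    · have hr : (fromEdgeSet P).Reachable _ _ := Adj.reachable ⟨hP, hne⟩
      grind [Reachable.trans]

lemma Walk.apply_eq_apply_of_forall_dart {G : SimpleGraph V} {β : Type*} {f : V → β} {a b : V}
    (W : G.Walk a b) (h : ∀ d ∈ W.darts, f d.fst = f d.snd) : f a = f b := by
  induction W with
  | nil => rfl
  | cons hadj W ih =>
    simp only [Walk.darts_cons, List.mem_cons, forall_eq_or_imp] at h
    exact h.1.trans (ih h.2)

end SimpleGraph

namespace HNetwork

variable {N : HNetwork} {P C S : Set (Sym2 (ℤ × ℤ))}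

def srcSide (N : HNetwork) (C : Set (Sym2 (ℤ × ℤ))) : Set (ℤ × ℤ) :=
  {p | ∃ s ∈ N.src, (fromEdgeSet (N.edges \ C)).Reachable s p}

def tgtSide (N : HNetwork) (C : Set (Sym2 (ℤ × ℤ))) : Set (ℤ × ℤ) :=
  {p | ∃ t ∈ N.tgt, (fromEdgeSet (N.edges \ C)).Reachable p t}

theorem isPathset_iff (hN : N.edges ⊆ xGraph.edgeSet) :
    N.IsPathset P ↔ P ⊆ N.edges ∧ ∃ s ∈ N.src, ∃ t ∈ N.tgt, (fromEdgeSet P).Reachable s t := by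
  constructor
  · rintro ⟨hP, vs, hne, ⟨-, hchain⟩, hs, ht, hvs⟩
    let W : xGraph.Walk _ _ := Walk.ofSupport vs hne hchain
    have hsupp : W.support = vs := Walk.support_ofSupport (G := xGraph) hne hchain
    have hW : ∀ e ∈ W.edges, e ∈ (fromEdgeSet P).edgeSet := fun e he => by
      rw [edgeSet_fromEdgeSet]
      refine ⟨hvs e ?_, xGraph.not_isDiag_of_mem_edgeSet (W.edges_subset_edgeSet he)⟩
      rwa [Walk.edges_eq_zipWith_support, hsupp, ← xEdges_eq_zipWith] at he
    exact ⟨hP, _, hs, _, ht, ⟨W.transfer _ hW⟩⟩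
  · rintro ⟨hP, s, hs, t, ht, ⟨W⟩⟩
    have hle : fromEdgeSet P ≤ xGraph :=
      (fromEdgeSet_le _).2 (Set.sdiff_subset.trans (hP.trans hN))
    let W' := (W.mapLe hle).bypass
    refine ⟨hP, W'.support, W'.support_ne_nil,
      ⟨(Walk.bypass_isPath _).support_nodup, W'.isChain_adj_support⟩, by simpa using hs,
      by simpa using ht, fun e he => ?_⟩
    rw [xEdges_eq_zipWith, ← Walk.edges_eq_zipWith_support] at he
    have := W.edges_subset_edgeSet
      (Walk.edges_mapLe_eq_edges hle W ▸ Walk.edges_bypass_subset_edges _ he)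
    rw [edgeSet_fromEdgeSet] at this
    exact this.1

theorem isCutset_iff (hN : N.edges ⊆ xGraph.edgeSet) :
    N.IsCutset C ↔ C ⊆ N.edges ∧
      ∀ s ∈ N.src, ∀ t ∈ N.tgt, ¬ (fromEdgeSet (N.edges \ C)).Reachable s t := by
  simp [IsCutset, isPathset_iff hN]

theorem IsCutset.notMem_tgtSide (hN : N.edges ⊆ xGraph.edgeSet) (hC : N.IsCutset C) {p : ℤ × ℤ}
    (hp : p ∈ N.srcSide C) : p ∉ N.tgtSide C := by
  rintro ⟨t, ht, hpt⟩
  obtain ⟨s, hs, hsp⟩ := hp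
  exact (isCutset_iff hN).1 hC |>.2 s hs t ht (hsp.trans hpt)

theorem IsMincut.exists_mem_srcSide_tgtSide (hN : N.edges ⊆ xGraph.edgeSet) (hS : N.IsMincut S)
    {e : Sym2 (ℤ × ℤ)} (he : e ∈ S) : ∃ x ∈ N.srcSide S, ∃ y ∈ N.tgtSide S, e = s(x, y) := by
  induction e using Sym2.ind with
  | _ x y =>
  have hsub : S ⊆ N.edges := hS.1.1
  have hpath : N.IsPathset (N.edges \ (S \ {s(x, y)})) := by
    by_contra h
    exact hS.2 _ (Set.sdiff_singleton_ssubset.2 he) ⟨Set.sdiff_subset.trans hsub, h⟩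
  have hins : N.edges \ (S \ {s(x, y)}) = insert s(x, y) (N.edges \ S) := by
    rw [Set.sdiff_sdiff_right, Set.inter_singleton_of_mem (hsub he), Set.union_singleton]
  obtain ⟨-, s, hs, t, ht, hst⟩ := (isPathset_iff hN).1 hpath
  rw [hins] at hst
  rcases reachable_fromEdgeSet_insert hst with h | ⟨hx, hy⟩ | ⟨hy, hx⟩
  · exact absurd h ((isCutset_iff hN).1 hS.1 |>.2 s hs t ht)
  · exact ⟨x, ⟨s, hs, hx⟩, y, ⟨t, ht, hy⟩, rfl⟩
  · exact ⟨y, ⟨s, hs, hy⟩, x, ⟨t, ht, hx⟩, Sym2.eq_swap⟩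

end HNetwork

lemma xGraph_parity_eq_of_adj {a b : ℤ × ℤ} (h : xGraph.Adj a b) :
    (b.1 + b.2) % 2 = (a.1 + a.2) % 2 := by
  rw [xGraph_adj_iff] at h
  omega

lemma xGraph_parity_eq_of_mem_support {a b u : ℤ × ℤ} (W : xGraph.Walk a b)
    (hu : u ∈ W.support) : (u.1 + u.2) % 2 = (a.1 + a.2) % 2 := by
  induction W with
  | nil => rw [Walk.mem_support_nil_iff.1 hu]
  | cons h W ih =>
    rcases List.mem_cons.1 (Walk.support_cons h W ▸ hu) with rfl | hu
    · rfl
    · exact (ih hu).trans (xGraph_parity_eq_of_adj h)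

lemma ite_add_ite_zmod_two (P Q : Prop) [Decidable P] [Decidable Q] :
    ((if P then 1 else 0 : ZMod 2) + if Q then 1 else 0) = if Xor P Q then 1 else 0 := by
  by_cases hP : P <;> by_cases hQ : Q <;> simp [hP, hQ, Xor, CharTwo.add_self_eq_zero]

/-- Whether the step `uv` crosses the vertical half-line `{p.1 + 1/2} × (-∞, p.2)`. -/
def crossInd (p u v : ℤ × ℤ) : ZMod 2 :=
  if min u.1 v.1 = p.1 ∧ u.2 + v.2 < 2 * p.2 then 1 else 0

/-- Whether `u` lies between the half-lines of `p` and `q` (see `crossInd`), below both. -/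
def belowInd (p q u : ℤ × ℤ) : ZMod 2 :=
  if u.1 = max p.1 q.1 ∧ u.2 < min p.2 q.2 then 1 else 0

def crossCount (p : ℤ × ℤ) {a b : ℤ × ℤ} (W : xGraph.Walk a b) : ZMod 2 :=
  (W.darts.map fun d => crossInd p d.fst d.snd).sum

lemma crossInd_add_crossInd {p q u v : ℤ × ℤ} (hpq : xGraph.Adj p q) (huv : xGraph.Adj u v)
    (hpu : (p.1 + p.2) % 2 = (u.1 + u.2) % 2) (hup : u ≠ p) (huq : u ≠ q) (hvp : v ≠ p)
    (hvq : v ≠ q) :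
    crossInd p u v + crossInd q u v = belowInd p q u + belowInd p q v := by
  simp only [crossInd, belowInd, ite_add_ite_zmod_two]
  refine if_congr ?_ rfl rfl
  obtain ⟨p1, p2⟩ := p; obtain ⟨q1, q2⟩ := q; obtain ⟨u1, u2⟩ := u; obtain ⟨v1, v2⟩ := v
  simp only [xGraph_adj_iff, ne_eq, Prod.mk.injEq, Xor] at *
  obtain ⟨h1 | h1, h2 | h2⟩ := hpq <;> obtain ⟨h3 | h3, h4 | h4⟩ := huv <;> subst h1 h2 h3 h4 <;>
    omega

/-- Moving the half-line from `p` to a neighbour `q` changes the crossing number of a walk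
by the number of its endpoints swept over. -/
lemma crossCount_add_crossCount {p q s b : ℤ × ℤ} (hpq : xGraph.Adj p q) (W : xGraph.Walk s b)
    (hps : (p.1 + p.2) % 2 = (s.1 + s.2) % 2) (hp : p ∉ W.support) (hq : q ∉ W.support) :
    crossCount p W + crossCount q W = belowInd p q s + belowInd p q b := by
  induction W with
  | nil => simp [crossCount, CharTwo.add_self_eq_zero]
  | cons h W ih =>
    simp only [Walk.support_cons, List.mem_cons, not_or] at hp hq
    have hstep := crossInd_add_crossInd hpq h hps (Ne.symm hp.1) (Ne.symm hq.1)
      (fun h' => hp.2 (h' ▸ W.start_mem_support)) (fun h' => hq.2 (h' ▸ W.start_mem_support))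
    have hrest := ih (hps.trans (xGraph_parity_eq_of_adj h).symm) hp.2 hq.2
    simp only [crossCount, Walk.darts_cons, List.map_cons, List.sum_cons] at hrest ⊢
    linear_combination (norm := skip) hstep + hrest
    ring_nf
    reduce_mod_char

lemma crossCount_eq_zero {p a b : ℤ × ℤ} {W : xGraph.Walk a b}
    (h : ∀ d ∈ W.darts, ¬(min d.fst.1 d.snd.1 = p.1 ∧ d.fst.2 + d.snd.2 < 2 * p.2)) :
    crossCount p W = 0 :=
  List.sum_eq_zero fun x hx => by
    obtain ⟨d, hd, rfl⟩ := List.mem_map.1 hx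
    exact if_neg (h d hd)

lemma crossCount_add_ite_eq {p q s b : ℤ × ℤ} (hpq : xGraph.Adj p q) (Q : xGraph.Walk s b)
    (hps : (p.1 + p.2) % 2 = (s.1 + s.2) % 2) (hpQ : p ∉ Q.support) (hqQ : q ∉ Q.support)
    (hp : 0 ≤ p.2 ∧ p.1 < b.1) (hq : 0 ≤ q.2 ∧ q.1 < b.1) (hs0 : 0 ≤ s.2) (hs1 : s.2 ≤ 1) :
    crossCount p Q + (if s.1 ≤ p.1 then 1 else 0) =
      crossCount q Q + if s.1 ≤ q.1 then 1 else 0 := by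
  have hcross := crossCount_add_crossCount hpq Q hps hpQ hqQ
  have hb : belowInd p q b = 0 := if_neg (by omega)
  have hs : belowInd p q s = (if s.1 ≤ p.1 then 1 else 0) + if s.1 ≤ q.1 then 1 else 0 := by
    rw [belowInd, ite_add_ite_zmod_two]
    refine if_congr ?_ rfl rfl
    have hsp : s ≠ p := fun h => hpQ (h ▸ Q.start_mem_support)
    have hsq : s ≠ q := fun h => hqQ (h ▸ Q.start_mem_support)
    rw [ne_eq, Prod.ext_iff, not_and_or] at hsp hsq
    have := xGraph_adj_iff.1 hpq
    simp only [Xor]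
    omega
  linear_combination (norm := skip) hcross - hb - hs
  ring_nf
  reduce_mod_char

theorem exists_mem_support_of_interleaved {a t s b : ℤ × ℤ} (P : xGraph.Walk a t)
    (Q : xGraph.Walk s b) (hpar : (a.1 + a.2) % 2 = (s.1 + s.2) % 2)
    (hP : ∀ u ∈ P.support, 0 ≤ u.2 ∧ u.1 < b.1) (hQ : ∀ u ∈ Q.support, 0 ≤ u.2 ∧ a.1 < u.1)
    (hs : s.2 ≤ 1) (ht : t.2 ≤ 1) (hst : s.1 ≤ t.1) : ∃ u ∈ P.support, u ∈ Q.support := by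
  by_contra! hdisj
  -- the crossing number with `Q`, corrected by the side of `s`, is invariant along `P`
  let g : ℤ × ℤ → ZMod 2 := fun p => crossCount p Q + if s.1 ≤ p.1 then 1 else 0
  have hparP : ∀ u ∈ P.support, (u.1 + u.2) % 2 = (s.1 + s.2) % 2 := fun u hu =>
    (xGraph_parity_eq_of_mem_support P hu).trans hpar
  have hstep : ∀ d ∈ P.darts, g d.fst = g d.snd := fun d hd => by
    have hp := P.dart_fst_mem_support_of_mem_darts hd
    have hq := P.dart_snd_mem_support_of_mem_darts hd
    exact crossCount_add_ite_eq d.adj Q (hparP _ hp) (hdisj _ hp) (hdisj _ hq) (hP _ hp)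
      (hP _ hq) (hQ _ Q.start_mem_support).1 hs
  have hga : g a = 0 := by
    have hQa : crossCount a Q = 0 := crossCount_eq_zero fun d hd => by
      have := hQ _ (Q.dart_fst_mem_support_of_mem_darts hd)
      have := hQ _ (Q.dart_snd_mem_support_of_mem_darts hd)
      omega
    have := hQ _ Q.start_mem_support
    simp [g, hQa, show ¬ s.1 ≤ a.1 by omega]
  have hgt : g t = 1 := by
    have hQt : crossCount t Q = 0 := crossCount_eq_zero fun d hd => by
      have hu := Q.dart_fst_mem_support_of_mem_darts hd
      have hv := Q.dart_snd_mem_support_of_mem_darts hd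
      have := hQ _ hu; have := hQ _ hv; have := hparP _ P.end_mem_support
      have := xGraph_parity_eq_of_mem_support Q hu
      have := xGraph_adj_iff.1 d.adj
      have htu : d.fst ≠ t := fun h => hdisj _ P.end_mem_support (h ▸ hu)
      have htv : d.snd ≠ t := fun h => hdisj _ P.end_mem_support (h ▸ hv)
      rw [ne_eq, Prod.ext_iff, not_and_or] at htu htv
      omega
    simp [g, hQt, hst]
  exact zero_ne_one ((hga.symm.trans (P.apply_eq_apply_of_forall_dart hstep)).trans hgt)

def kindParity (i : ℕ) : ℤ := if i = 1 then 0 else 1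

lemma hammockPar_iff {i : ℕ} {p : ℤ × ℤ} :
    HammockPar i p ↔ (p.1 + p.2 + kindParity i) % 2 = 0 := by
  unfold HammockPar kindParity
  split_ifs <;> simp only [Int.even_iff, Int.odd_iff] <;> omega

lemma mk_mem_hammockE_iff {i l w : ℕ} {a b : ℤ × ℤ} :
    s(a, b) ∈ HammockE i l w ↔ a ∈ HammockV i l w ∧ b ∈ HammockV i l w ∧ xGraph.Adj a b := by
  have hadj : ∀ a b : ℤ × ℤ, (|a.1 - b.1| = 1 ∧ |a.2 - b.2| = 1) ↔ xGraph.Adj a b := by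
    intro a b
    rw [xGraph_adj_iff, abs_eq zero_le_one, abs_eq zero_le_one]
    omega
  simp only [HammockE, HammockEAll, HammockV, Set.mem_ofPred_eq, Sym2.mem_iff, forall_eq_or_imp,
    forall_eq, hadj]
  constructor
  · rintro ⟨⟨a', b', heq, ha, hb, hab⟩, hpa, hpb⟩
    rcases Sym2.eq_iff.1 heq with ⟨rfl, rfl⟩ | ⟨rfl, rfl⟩
    · exact ⟨⟨ha, hpa⟩, ⟨hb, hpb⟩, hab⟩
    · exact ⟨⟨hb, hpa⟩, ⟨ha, hpb⟩, hab.symm⟩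
  · rintro ⟨⟨ha, hpa⟩, ⟨hb, hpb⟩, hab⟩
    exact ⟨⟨a, b, rfl, ha, hb, hab⟩, hpa, hpb⟩

lemma hammock_edges_subset_edgeSet (i l w : ℕ) : (hammock i l w).edges ⊆ xGraph.edgeSet := by
  intro e he
  induction e using Sym2.ind with
  | _ a b => exact (mk_mem_hammockE_iff.1 he).2.2

section Cut

variable {i l w : ℕ} {S : Set (Sym2 (ℤ × ℤ))}

lemma mem_hammockV_of_reachable {u v : ℤ × ℤ}
    (h : (fromEdgeSet ((hammock i l w).edges \ S)).Reachable u v) (hu : u ∈ HammockV i l w) :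
    v ∈ HammockV i l w := by
  obtain ⟨W⟩ := h
  induction W with
  | nil => exact hu
  | cons h _ ih => exact ih (mk_mem_hammockE_iff.1 h.1.1).2.1

lemma mem_hammockV_and_fst_lt_of_mem_srcSide (hS : (hammock i l w).IsCutset S) {p : ℤ × ℤ}
    (hp : p ∈ (hammock i l w).srcSide S) : p ∈ HammockV i l w ∧ p.1 < l := by
  obtain ⟨s, hs, hsp⟩ := hp
  have hV := mem_hammockV_of_reachable hsp hs.1
  refine ⟨hV, lt_of_le_of_ne hV.1.2.1 fun h => ?_⟩
  exact hS.notMem_tgtSide (hammock_edges_subset_edgeSet i l w) ⟨s, hs, hsp⟩ ⟨p, ⟨hV, h⟩, .rfl⟩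

lemma mem_hammockV_and_fst_pos_of_mem_tgtSide (hS : (hammock i l w).IsCutset S) {p : ℤ × ℤ}
    (hp : p ∈ (hammock i l w).tgtSide S) : p ∈ HammockV i l w ∧ 0 < p.1 := by
  obtain ⟨t, ht, hpt⟩ := hp
  have hV := mem_hammockV_of_reachable hpt.symm ht.1
  refine ⟨hV, lt_of_le_of_ne hV.1.1 fun h => ?_⟩
  exact hS.notMem_tgtSide (hammock_edges_subset_edgeSet i l w) ⟨p, ⟨hV, h.symm⟩, .rfl⟩ ⟨t, ht, hpt⟩

theorem lt_of_mem_srcSide_of_mem_tgtSide (hS : (hammock i l w).IsCutset S) {p q : ℤ × ℤ}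
    (hp : p ∈ (hammock i l w).srcSide S) (hq : q ∈ (hammock i l w).tgtSide S) (hp1 : p.2 ≤ 1)
    (hq1 : q.2 ≤ 1) : p.1 < q.1 := by
  by_contra! hqp
  have hN := hammock_edges_subset_edgeSet i l w
  obtain ⟨a, ha, ⟨P⟩⟩ := id hp
  obtain ⟨b, hb, ⟨Q⟩⟩ := id hq
  have hPA : ∀ u ∈ P.support, u ∈ (hammock i l w).srcSide S := fun u hu =>
    ⟨a, ha, ⟨P.takeUntil u hu⟩⟩
  have hQB : ∀ u ∈ Q.support, u ∈ (hammock i l w).tgtSide S := fun u hu =>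
    ⟨b, hb, ⟨Q.dropUntil u hu⟩⟩
  have hle : fromEdgeSet ((hammock i l w).edges \ S) ≤ xGraph :=
    (fromEdgeSet_le _).2 (Set.sdiff_subset.trans (Set.sdiff_subset.trans hN))
  have hpar : (a.1 + a.2) % 2 = (q.1 + q.2) % 2 := by
    have := hammockPar_iff.1 ha.1.2
    have := hammockPar_iff.1 (mem_hammockV_and_fst_pos_of_mem_tgtSide hS hq).1.2
    omega
  have hPbound : ∀ u ∈ (P.mapLe hle).support, 0 ≤ u.2 ∧ u.1 < b.1 := fun u hu => by
    rw [Walk.support_mapLe_eq_support] at hu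
    obtain ⟨hV, hlt⟩ := mem_hammockV_and_fst_lt_of_mem_srcSide hS (hPA u hu)
    exact ⟨hV.1.2.2.1, hb.2 ▸ hlt⟩
  have hQbound : ∀ u ∈ (Q.mapLe hle).support, 0 ≤ u.2 ∧ a.1 < u.1 := fun u hu => by
    rw [Walk.support_mapLe_eq_support] at hu
    obtain ⟨hV, hlt⟩ := mem_hammockV_and_fst_pos_of_mem_tgtSide hS (hQB u hu)
    exact ⟨hV.1.2.2.1, ha.2 ▸ hlt⟩
  obtain ⟨u, huP, huQ⟩ := exists_mem_support_of_interleaved (P.mapLe hle) (Q.mapLe hle) hpar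
    hPbound hQbound hq1 hp1 hqp
  rw [Walk.support_mapLe_eq_support] at huP huQ
  exact hS.notMem_tgtSide hN (hPA u huP) (hQB u huQ)

end Cut

def bottomZig (c : ℤ) (k : ℕ) : ℤ × ℤ := (k, (k + c) % 2)

section Bottom

variable {i l w : ℕ}

lemma bottomZig_mem_hammockV (hw : 0 < w) {k : ℕ} (hk : k ≤ l) :
    bottomZig (kindParity i) k ∈ HammockV i l w := by
  refine ⟨⟨?_, ?_, ?_, ?_⟩, hammockPar_iff.2 ?_⟩ <;> simp only [bottomZig] <;> omega

lemma bottomZig_adj (c : ℤ) (k : ℕ) : xGraph.Adj (bottomZig c k) (bottomZig c (k + 1)) := by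
  rw [xGraph_adj_iff]
  simp only [bottomZig]
  omega

lemma exists_eq_bottomZig_edge {e : Sym2 (ℤ × ℤ)} (he : e ∈ HammockE i l w) {p : ℤ × ℤ}
    (hp : p ∈ e) (hp0 : p.2 = 0) :
    ∃ k : ℕ, e = s(bottomZig (kindParity i) k, bottomZig (kindParity i) (k + 1)) := by
  induction e using Sym2.ind with
  | _ a b =>
  wlog hpa : p = a generalizing a b
  · rw [Sym2.eq_swap] at he ⊢
    exact this b a he (Sym2.eq_swap ▸ hp) ((Sym2.mem_iff.1 hp).resolve_left hpa)
  subst hpa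
  obtain ⟨⟨⟨hp1, -, -, -⟩, hpp⟩, ⟨⟨hb1, -, hb2, -⟩, hbp⟩, hadj⟩ := mk_mem_hammockE_iff.1 he
  rw [hammockPar_iff] at hpp hbp
  rw [xGraph_adj_iff] at hadj
  rcases hadj.1 with h | h
  · refine ⟨p.1.toNat, Sym2.eq_iff.2 (.inl ⟨?_, ?_⟩)⟩ <;> ext <;> simp only [bottomZig] <;>
      push_cast <;> omega
  · refine ⟨b.1.toNat, Sym2.eq_iff.2 (.inr ⟨?_, ?_⟩)⟩ <;> ext <;> simp only [bottomZig] <;>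
      push_cast <;> omega

theorem existsUnique_mincut_bottom (hw : 0 < w) {S : Set (Sym2 (ℤ × ℤ))}
    (hS : (hammock i l w).IsMincut S) : ∃! e, e ∈ S ∧ ∃ p ∈ e, p.2 = (0 : ℤ) := by
  set z := bottomZig (kindParity i)
  have hN := hammock_edges_subset_edgeSet i l w
  let A := (hammock i l w).srcSide S
  let B := (hammock i l w).tgtSide S
  have hsep : ∀ j k, z j ∈ A → z k ∈ B → j < k := fun j k hj hk => by
    have := lt_of_mem_srcSide_of_mem_tgtSide hS.1 hj hk (by simp only [z, bottomZig]; omega)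
      (by simp only [z, bottomZig]; omega)
    simpa [z, bottomZig] using this
  have horient : ∀ k, s(z k, z (k + 1)) ∈ S → z k ∈ A ∧ z (k + 1) ∈ B := fun k hk => by
    obtain ⟨x, hx, y, hy, hxy⟩ := hS.exists_mem_srcSide_tgtSide hN hk
    rcases Sym2.eq_iff.1 hxy with ⟨rfl, rfl⟩ | ⟨rfl, rfl⟩
    · exact ⟨hx, hy⟩
    · exact absurd (hsep _ _ hx hy) (by omega)
  have hcut : ∃ k, s(z k, z (k + 1)) ∈ S := by
    by_contra! hno
    have hA : ∀ m ≤ l, z m ∈ A := by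
      intro m hm
      induction m with
      | zero => exact ⟨z 0, ⟨bottomZig_mem_hammockV hw (Nat.zero_le l), rfl⟩, .rfl⟩
      | succ m ih =>
        obtain ⟨s, hs, hsm⟩ := ih (by omega)
        refine ⟨s, hs, hsm.trans (Adj.reachable ⟨⟨?_, hno m⟩, (bottomZig_adj _ m).ne⟩)⟩
        exact mk_mem_hammockE_iff.2 ⟨bottomZig_mem_hammockV hw (by omega),
          bottomZig_mem_hammockV hw hm, bottomZig_adj _ m⟩
    exact hS.1.notMem_tgtSide hN (hA l le_rfl)
      ⟨z l, ⟨bottomZig_mem_hammockV hw le_rfl, rfl⟩, .rfl⟩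
  obtain ⟨k, hk⟩ := hcut
  refine ⟨s(z k, z (k + 1)), ⟨hk, ?_⟩, ?_⟩
  · by_cases h : (k + kindParity i) % 2 = 0
    · exact ⟨z k, Sym2.mem_mk_left _ _, h⟩
    · exact ⟨z (k + 1), Sym2.mem_mk_right _ _, by simp only [z, bottomZig]; push_cast; omega⟩
  · rintro e ⟨he, p, hp, hp0⟩
    obtain ⟨m, rfl⟩ := exists_eq_bottomZig_edge (hS.1.1 he) hp hp0
    have h1 := hsep _ _ (horient m he).1 (horient k hk).2
    have h2 := hsep _ _ (horient k hk).1 (horient m he).2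
    rw [show m = k by omega]

end Bottom

lemma Sym2.map_involutive {α : Type*} {f : α → α} (hf : Function.Involutive f) :
    Function.Involutive (Sym2.map f) := fun e => by
  rw [Sym2.map_map, hf.comp_self, Sym2.map_id, id]

namespace HNetwork

def map (f : ℤ × ℤ → ℤ × ℤ) (N : HNetwork) : HNetwork :=
  ⟨Sym2.map f '' N.edges, f '' N.src, f '' N.tgt⟩

variable {N : HNetwork} {f : ℤ × ℤ → ℤ × ℤ} {P C : Set (Sym2 (ℤ × ℤ))}

lemma map_map_of_involutive (hf : Function.Involutive f) (N : HNetwork) : (N.map f).map f = N := by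
  simp only [map, (Sym2.map_involutive hf).leftInverse.image_image, hf.leftInverse.image_image]

lemma map_edges_subset (hN : N.edges ⊆ xGraph.edgeSet)
    (hstep : ∀ a b, xGraph.Adj a b → xGraph.Adj (f a) (f b)) :
    (N.map f).edges ⊆ xGraph.edgeSet := by
  rintro _ ⟨e, he, rfl⟩
  induction e using Sym2.ind with
  | _ a b => exact hstep a b (hN he)

theorem IsPathset.map (hN : N.edges ⊆ xGraph.edgeSet) (hf : Function.Injective f)
    (hstep : ∀ a b, xGraph.Adj a b → xGraph.Adj (f a) (f b)) (h : N.IsPathset P) :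
    (N.map f).IsPathset (Sym2.map f '' P) := by
  obtain ⟨hP, s, hs, t, ht, hst⟩ := (isPathset_iff hN).1 h
  let φ : fromEdgeSet P →g fromEdgeSet (Sym2.map f '' P) :=
    ⟨f, fun {a b} hab => ⟨⟨s(a, b), hab.1, rfl⟩, hf.ne hab.2⟩⟩
  exact (isPathset_iff (map_edges_subset hN hstep)).2
    ⟨Set.image_mono hP, f s, ⟨s, hs, rfl⟩, f t, ⟨t, ht, rfl⟩, hst.map φ⟩

theorem IsCutset.map (hN : N.edges ⊆ xGraph.edgeSet) (hf : Function.Involutive f)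
    (hstep : ∀ a b, xGraph.Adj a b → xGraph.Adj (f a) (f b)) (h : N.IsCutset C) :
    (N.map f).IsCutset (Sym2.map f '' C) := by
  have hF := Sym2.map_involutive hf
  refine ⟨Set.image_mono h.1, fun hp => h.2 ?_⟩
  have := hp.map (map_edges_subset hN hstep) hf.injective hstep
  rwa [map_map_of_involutive hf, HNetwork.map, ← Set.image_sdiff hF.injective,
    hF.leftInverse.image_image] at this

theorem IsMincut.map (hN : N.edges ⊆ xGraph.edgeSet) (hf : Function.Involutive f)
    (hstep : ∀ a b, xGraph.Adj a b → xGraph.Adj (f a) (f b)) (h : N.IsMincut C) :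
    (N.map f).IsMincut (Sym2.map f '' C) := by
  have hF := Sym2.map_involutive hf
  refine ⟨h.1.map hN hf hstep, fun D hD hDcut => h.2 (Sym2.map f '' D) ?_ ?_⟩
  · simpa only [hF.leftInverse.image_image] using hF.injective.image_strictMono hD
  · simpa only [map_map_of_involutive hf] using hDcut.map (map_edges_subset hN hstep) hf hstep

end HNetwork

def reflectY (w : ℕ) (p : ℤ × ℤ) : ℤ × ℤ := (p.1, w - p.2)

lemma reflectY_involutive (w : ℕ) : Function.Involutive (reflectY w) := fun p => by
  simp [reflectY]

lemma xGraph_adj_reflectY_iff {w : ℕ} {a b : ℤ × ℤ} :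
    xGraph.Adj (reflectY w a) (reflectY w b) ↔ xGraph.Adj a b := by
  simp only [xGraph_adj_iff, reflectY]
  omega

lemma exists_hammock_map_reflectY (i l w : ℕ) :
    ∃ j, (hammock i l w).map (reflectY w) = hammock j l w := by
  obtain ⟨j, hj⟩ : ∃ j, (kindParity j - kindParity i - w) % 2 = 0 :=
    ⟨if (kindParity i + w) % 2 = 0 then 1 else 2, by unfold kindParity; split_ifs <;> omega⟩
  have hV : ∀ p, p ∈ HammockV j l w ↔ reflectY w p ∈ HammockV i l w := fun p => by
    simp only [HammockV, HammockVAll, Set.mem_ofPred_eq, hammockPar_iff, reflectY]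
    omega
  have hinv := reflectY_involutive w
  refine ⟨j, ?_⟩
  simp only [HNetwork.map, hammock, hinv.image_eq_preimage_symm,
    (Sym2.map_involutive hinv).image_eq_preimage_symm]
  congr 1
  · ext e
    induction e using Sym2.ind with
    | _ a b =>
      simp only [Set.mem_preimage, Sym2.map_mk, mk_mem_hammockE_iff, hV, xGraph_adj_reflectY_iff]
  · ext p
    simp only [Set.mem_preimage, Set.mem_ofPred_eq, hV, reflectY]
  · ext p
    simp only [Set.mem_preimage, Set.mem_ofPred_eq, hV, reflectY]

theorem mincut_unique_boundary_edges_general (l w : ℕ) (hw : 0 < w)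
    (i : ℕ) (S : Set (Sym2 (ℤ × ℤ)))
    (hS : (hammock i l w).IsMincut S) :
    (∃! e : Sym2 (ℤ × ℤ), e ∈ S ∧ ∃ p ∈ e, p.2 = (0 : ℤ)) ∧
    (∃! e : Sym2 (ℤ × ℤ), e ∈ S ∧ ∃ p ∈ e, p.2 = (w : ℤ)) := by
  refine ⟨existsUnique_mincut_bottom hw hS, ?_⟩
  obtain ⟨j, hj⟩ := exists_hammock_map_reflectY i l w
  have hinv := reflectY_involutive w
  have hS' := hj ▸ hS.map (hammock_edges_subset_edgeSet i l w) hinv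
    fun _ _ => xGraph_adj_reflectY_iff.2
  refine ((Sym2.map_involutive hinv).toPerm _).existsUnique_congr (fun e => ?_) |>.2
    (existsUnique_mincut_bottom hw hS')
  simp only [Function.Involutive.coe_toPerm, (Sym2.map_involutive hinv).injective.mem_set_image,
    Sym2.mem_map, reflectY]
  constructor
  · rintro ⟨he, p, hp, hpw⟩
    exact ⟨he, _, ⟨p, hp, rfl⟩, by simp [hpw]⟩
  · rintro ⟨he, _, ⟨p, hp, rfl⟩, hp0⟩
    exact ⟨he, p, hp, by simp at hp0; omega⟩

/-- Every mincut Σ of H^{(i)}_{l,w} contains exactly one edge having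
an endpoint on the line y = 0, and exactly one edge having an endpoint on the
line y = w. -/
theorem mincut_unique_boundary_edges (l w : ℕ) (hl : 0 < l) (hw : 0 < w)
    (i : ℕ) (hi : i = 1 ∨ i = 2) (S : Set (Sym2 (ℤ × ℤ)))
    (hS : (hammock i l w).IsMincut S) :
    (∃! e : Sym2 (ℤ × ℤ), e ∈ S ∧ ∃ p ∈ e, p.2 = (0 : ℤ)) ∧
    (∃! e : Sym2 (ℤ × ℤ), e ∈ S ∧ ∃ p ∈ e, p.2 = (w : ℤ)) :=
  mincut_unique_boundary_edges_general l w hw i S hS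
end
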